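/- arXiv:1808.03564 — 4 statements merged into one kernel-verified Lean document; each statement's English description precedes it below -/
import Mathlib

section
/- Let (ℬ, 𝒜, e, l, i) be a cleft extension of abelian categories. Then the functor i : ℬ ⥤ 𝒜 is fully faithful and exact (it preserves short exact sequences). -/
/-!
Since `i ⋙ e` is isomorphic to the identity and `e` is faithful, `i` is fully faithful. A faithful
exact functor reflects short exact sequences, and `e` sends the image under `i` of a short exact
sequence `S` to a complex isomorphic to `S`; hence `i` preserves short exact sequences.
-/

open CategoryTheory CategoryTheory.Limits

universe v v' u u'

/-- A cleft extension of abelian categories. -/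
structure CleftExtension (B : Type u) (A : Type u') [Category.{v} B] [Category.{v'} A]
    [Abelian B] [Abelian A] where
  /-- the inclusion functor -/
  i : B ⥤ A
  /-- the quotient functor -/
  e : A ⥤ B
  /-- the left adjoint of `e` -/
  l : B ⥤ A
  e_faithful : e.Faithful
  e_preservesFiniteLimits : PreservesFiniteLimits e
  e_preservesFiniteColimits : PreservesFiniteColimits e
  /-- `(l, e)` is an adjoint pair -/
  adj : l ⊣ e
  /-- `e ∘ i` is naturally isomorphic to the identity functor of `B` -/
  iso : i ⋙ e ≅ 𝟭 B

/-- A functor between abelian categories preserves short exact sequences. -/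
def PreservesShortExactSequences {B : Type u} {A : Type u'} [Category.{v} B] [Category.{v'} A]
    [Abelian B] [Abelian A] (F : B ⥤ A) : Prop :=
  ∀ S : ShortComplex B, S.ShortExact →
    ∃ w : F.map S.f ≫ F.map S.g = 0, (ShortComplex.mk (F.map S.f) (F.map S.g) w).ShortExact

namespace CategoryTheory.ShortComplex

variable {C : Type*} {D : Type*} [Category C] [Category D]
  [HasZeroMorphisms C] [HasZeroMorphisms D]

lemma ShortExact.of_map [CategoryWithHomology C] [CategoryWithHomology D] {S : ShortComplex C}
    (F : C ⥤ D) [F.PreservesZeroMorphisms] [F.PreservesHomology] [F.Faithful]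
    (h : (S.map F).ShortExact) :
    S.ShortExact :=
  have : Mono (F.map S.f) := h.mono_f
  have : Epi (F.map S.g) := h.epi_g
  { exact := (S.exact_map_iff_of_faithful F).mp h.exact
    mono_f := F.mono_of_mono_map ‹_›
    epi_g := F.epi_of_epi_map ‹_› }

lemma ShortExact.map_of_comp_iso_id [CategoryWithHomology C] [CategoryWithHomology D]
    {S : ShortComplex C} (hS : S.ShortExact) (F : C ⥤ D) (G : D ⥤ C) [F.PreservesZeroMorphisms]
    [G.PreservesZeroMorphisms] [G.PreservesHomology] [G.Faithful] (α : F ⋙ G ≅ 𝟭 C) :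
    (S.map F).ShortExact :=
  .of_map G (shortExact_of_iso (S.mapNatIso α).symm hS)

end CategoryTheory.ShortComplex

/-- In a cleft extension `(ℬ, 𝒜, e, l, i)` of abelian categories, the functor `i : ℬ ⥤ 𝒜`
is fully faithful and exact (it preserves short exact sequences). -/
theorem cleftExtension_i_fullyFaithful_exact {B : Type u} {A : Type u'}
    [Category.{v} B] [Category.{v'} A] [Abelian B] [Abelian A]
    (ce : CleftExtension B A) :
    ce.i.Full ∧ ce.i.Faithful ∧ PreservesShortExactSequences ce.i := by
  have := ce.e_faithful
  have := ce.e_preservesFiniteLimits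
  have := ce.e_preservesFiniteColimits
  have hi : ce.i.FullyFaithful :=
    .ofCompFaithful (G := ce.e) (.ofIso (.id B) ce.iso.symm)
  -- a full functor preserves zero morphisms, so `S.map ce.i` makes sense
  have := hi.full
  exact ⟨hi.full, hi.faithful, fun S hS =>
    ⟨(S.map ce.i).zero, hS.map_of_comp_iso_id ce.i ce.e ce.iso⟩⟩
end

section
/- Let (ℬ, 𝒜, e, l, i) be a cleft extension of abelian categories. Then there exists a functor q : 𝒜 ⥤ ℬ such that (q, i) is an adjoint pair (q is left adjoint to i), and moreover q ∘ l is naturally isomorphic to Id_ℬ. -/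
open CategoryTheory CategoryTheory.Limits

universe v v' u u'

/-!
Since `e` is faithful and `e.map ε_X` is split by a triangle identity, every counit
`ε_X : l (e X) ⟶ X` is an epimorphism, hence a regular one because `A` is abelian. The adjoint
triangle theorem then lifts the left adjoint of `i ⋙ e ≅ 𝟭` along `e` to a left adjoint `q` of
`i`. Composing adjunctions gives `l ⋙ q ⊣ i ⋙ e ≅ 𝟭`, so `l ⋙ q ≅ 𝟭` by uniqueness of adjoints.
-/

namespace CategoryTheory

variable {C : Type*} {D : Type*} {E : Type*} [Category C] [Category D] [Category E]

lemma Adjunction.epi_counit_app_of_faithful {F : C ⥤ D} {U : D ⥤ C} (adj : F ⊣ U) [U.Faithful]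
    (X : D) : Epi (adj.counit.app X) :=
  U.epi_of_epi_map (IsSplitEpi.mk' ⟨_, adj.right_triangle_components X⟩).epi

lemma Functor.isRightAdjoint_of_isRightAdjoint_comp_of_faithful [IsRegularEpiCategory D]
    [HasReflexiveCoequalizers E] {F : C ⥤ D} {U : D ⥤ C} (adj : F ⊣ U) [U.Faithful]
    (R : E ⥤ D) [(R ⋙ U).IsRightAdjoint] : R.IsRightAdjoint :=
  have := adj.epi_counit_app_of_faithful
  isRightAdjoint_triangle_lift R adj fun X ↦ regularEpiOfEpi (adj.counit.app X)

end CategoryTheory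

/-- In a cleft extension `(ℬ, 𝒜, e, l, i)` of abelian categories, there exists a functor
`q : 𝒜 ⥤ ℬ` which is left adjoint to `i`, and such that `q ∘ l ≅ Id_ℬ`. -/
theorem cleftExtension_exists_left_adjoint_of_i {B : Type u} {A : Type u'}
    [Category.{v} B] [Category.{v'} A] [Abelian B] [Abelian A]
    (ce : CleftExtension B A) :
    ∃ q : A ⥤ B, Nonempty (q ⊣ ce.i) ∧ Nonempty (ce.l ⋙ q ≅ 𝟭 B) := by
  have := ce.e_faithful
  have : (ce.i ⋙ ce.e).IsRightAdjoint := (Adjunction.id.ofNatIsoRight ce.iso.symm).isRightAdjoint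
  have := Functor.isRightAdjoint_of_isRightAdjoint_comp_of_faithful ce.adj ce.i
  let adjQ := Adjunction.ofIsRightAdjoint ce.i
  exact ⟨ce.i.leftAdjoint, ⟨adjQ⟩,
    ⟨Adjunction.leftAdjointUniq ((ce.adj.comp adjQ).ofNatIsoRight ce.iso) Adjunction.id⟩⟩
end

section
/- Let (𝒜, ℬ, 𝒞) be a recollement of abelian categories, all with enough projectives and injectives. If there is t such that pd_ℬ i(A) ≤ t for every object A of 𝒜, then for every object C of 𝒞 one has pd_ℬ l(C) ≤ pd_𝒞 C + t + 1; in particular, the functor l : 𝒞 ⥤ ℬ preserves objects of finite projective dimension. -/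
/-!
A recollement `(𝒜, ℬ, 𝒞)` of abelian categories consists of functors `i : 𝒜 ⥤ ℬ`,
`e : ℬ ⥤ 𝒞`, `q, p : ℬ ⥤ 𝒜` and `l, r : 𝒞 ⥤ ℬ` such that `(l, e)`, `(e, r)`, `(q, i)`,
`(i, p)` are adjoint pairs, the functors `i`, `l` and `r` are fully faithful, and the
essential image of `i` equals the kernel of `e`.

STATEMENT: if all three categories have enough projectives and injectives and there is `t`
such that `pd_ℬ i(A) ≤ t` for every object `A` of `𝒜`, then for every object `C` of `𝒞` one
has `pd_ℬ l(C) ≤ pd_𝒞 C + t + 1`; in particular `l : 𝒞 ⥤ ℬ` preserves objects of finite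
projective dimension.
-/

open CategoryTheory CategoryTheory.Limits

universe w v₁ v₂ v₃ u₁ u₂ u₃

/-- A recollement `(𝒜, ℬ, 𝒞)` of abelian categories. -/
structure Recollement (A : Type u₁) (B : Type u₂) (C : Type u₃)
    [Category.{v₁} A] [Category.{v₂} B] [Category.{v₃} C]
    [Abelian A] [Abelian B] [Abelian C] where
  /-- the inclusion functor -/
  i : A ⥤ B
  /-- the quotient functor -/
  e : B ⥤ C
  /-- the left adjoint of `i` -/
  q : B ⥤ A
  /-- the right adjoint of `i` -/
  p : B ⥤ A
  /-- the left adjoint of `e` -/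
  l : C ⥤ B
  /-- the right adjoint of `e` -/
  r : C ⥤ B
  /-- `(l, e)` is an adjoint pair -/
  adj_le : l ⊣ e
  /-- `(e, r)` is an adjoint pair -/
  adj_er : e ⊣ r
  /-- `(q, i)` is an adjoint pair -/
  adj_qi : q ⊣ i
  /-- `(i, p)` is an adjoint pair -/
  adj_ip : i ⊣ p
  i_full : i.Full
  i_faithful : i.Faithful
  l_full : l.Full
  l_faithful : l.Faithful
  r_full : r.Full
  r_faithful : r.Faithful
  /-- the essential image of `i` is the kernel of `e` -/
  essImage_i_eq_ker_e : ∀ X : B, i.essImage X ↔ IsZero (e.obj X)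

/-- The projective dimension of an object of an abelian category, as an element of `ℕ∞`:
the least `n` such that `X` admits a projective resolution
`0 → P_n → ⋯ → P_0 → X → 0` (and `⊤` if there is no such `n`). -/
noncomputable def projDim {C : Type u₁} [Category.{v₁} C] [Abelian C] (X : C) : ℕ∞ :=
  ⨅ (n : ℕ) (_ : ∃ P : CategoryTheory.ProjectiveResolution X,
    ∀ k, n < k → IsZero (P.complex.X k)), (n : ℕ∞)

/-- The injective dimension of an object of an abelian category, as an element of `ℕ∞`:
the least `n` such that `X` admits an injective coresolution
`0 → X → I^0 → ⋯ → I^n → 0` (and `⊤` if there is no such `n`). -/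
noncomputable def injDim {C : Type u₁} [Category.{v₁} C] [Abelian C] (X : C) : ℕ∞ :=
  ⨅ (n : ℕ) (_ : ∃ I : CategoryTheory.InjectiveResolution X,
    ∀ k, n < k → IsZero (I.cocomplex.X k)), (n : ℕ∞)

/-- The finitistic projective dimension of an abelian category: the supremum of the
projective dimensions of the objects having finite projective dimension. -/
noncomputable def catFindim (C : Type u₁) [Category.{v₁} C] [Abelian C] : ℕ∞ :=
  ⨆ (X : C) (_ : projDim X ≠ ⊤), projDim X

/-- An object of an abelian category has finite length if it admits a finite filtration
`⊥ = X_0 < X_1 < ⋯ < X_n = ⊤` by subobjects whose successive quotients are simple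
(a finite composition series). -/
def FiniteLengthObj {C : Type u₁} [Category.{v₁} C] [Abelian C] (X : C) : Prop :=
  ∃ (n : ℕ) (f : Fin (n + 1) → Subobject X), f 0 = ⊥ ∧ f (Fin.last n) = ⊤ ∧
    ∀ j : Fin n, ∃ h : f j.castSucc ≤ f j.succ,
      Simple (cokernel (Subobject.ofLE (f j.castSucc) (f j.succ) h))

/-- An abelian category is a finite length category if every object has a finite
composition series. -/
def FiniteLengthCategory (C : Type u₁) [Category.{v₁} C] [Abelian C] : Prop :=
  ∀ X : C, FiniteLengthObj X

/-- An abelian category has projective covers if every object `X` admits an epimorphism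
`f : P → X` with `P` projective whose kernel is superfluous, i.e. contained in the radical
of `P` (the intersection of all maximal subobjects of `P`). -/
def HasProjectiveCovers (C : Type u₁) [Category.{v₁} C] [Abelian C] : Prop :=
  ∀ X : C, ∃ (P : C) (_ : Projective P) (f : P ⟶ X), Epi f ∧
    ∀ m : Subobject P, IsCoatom m → kernelSubobject f ≤ m


namespace RecollementAux

set_option linter.unusedSectionVars false

variable {D : Type*} [Category D] [Abelian D]


lemma exact_congr {X₁ X₂ X₃ : D} {f f' : X₁ ⟶ X₂} {g g' : X₂ ⟶ X₃} {w : f ≫ g = 0}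
    {w' : f' ≫ g' = 0} (hf : f = f') (hg : g = g')
    (h : (ShortComplex.mk f g w).Exact) : (ShortComplex.mk f' g' w').Exact := by
  subst hf; subst hg; exact h

lemma exact_of_epi_comp {X₀ X₁ X₂ X₃ : D} {e : X₀ ⟶ X₁} {f : X₁ ⟶ X₂} {g : X₂ ⟶ X₃} [Epi e]
    {w : (e ≫ f) ≫ g = 0} (h : (ShortComplex.mk (e ≫ f) g w).Exact) :
    (ShortComplex.mk f g (by rw [← cancel_epi e, ← Category.assoc, w, comp_zero])).Exact := by
  rw [ShortComplex.exact_iff_exact_up_to_refinements] at h ⊢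
  intro A a ha
  obtain ⟨A', π, hπ, x, hx⟩ := h a ha
  exact ⟨A', π, hπ, x ≫ e, by simpa using hx⟩

lemma exact_of_comp_mono {X₁ X₂ X₃ X₄ : D} {f : X₁ ⟶ X₂} {g : X₂ ⟶ X₃} {m : X₃ ⟶ X₄} [Mono m]
    {w : f ≫ (g ≫ m) = 0} (h : (ShortComplex.mk f (g ≫ m) w).Exact) :
    (ShortComplex.mk f g (by rw [← cancel_mono m, Category.assoc, w, zero_comp])).Exact := by
  rw [ShortComplex.exact_iff_exact_up_to_refinements] at h ⊢
  intro A a ha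
  exact h a (by dsimp at ha ⊢; rw [← Category.assoc, ha, zero_comp])

noncomputable def mkProjRes {X : D} (Q : ChainComplex D ℕ) (hproj : ∀ n, Projective (Q.X n))
    (π₀ : Q.X 0 ⟶ X) (w : Q.d 1 0 ≫ π₀ = 0) (hepi : Epi π₀)
    (h0 : (ShortComplex.mk _ _ w).Exact) (hs : ∀ n, Q.ExactAt (n + 1)) :
    CategoryTheory.ProjectiveResolution X where
  complex := Q
  projective := hproj
  π := (ChainComplex.toSingle₀Equiv _ _).symm ⟨π₀, w⟩
  quasiIso := ⟨fun n => by
    cases n with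
    | zero =>
      rw [ChainComplex.quasiIsoAt₀_iff, ShortComplex.quasiIso_iff_of_zeros']
      · refine (ShortComplex.exact_and_epi_g_iff_of_iso ?_).2 ⟨h0, hepi⟩
        exact ShortComplex.isoMk (Iso.refl _) (Iso.refl _) (Iso.refl _)
          (by exact (Category.id_comp _).trans (Category.comp_id _).symm)
            (by simp [ChainComplex.toSingle₀Equiv]; exact (Category.id_comp _).trans (Category.comp_id _).symm)
      all_goals first | rfl | exact HomologicalComplex.shape _ 0 0 (by simp)
    | succ n =>
      rw [quasiIsoAt_iff_exactAt']
      · exact hs n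
      · apply ChainComplex.exactAt_succ_single_obj⟩

section Syzygy

variable {Y : D} (P : CategoryTheory.ProjectiveResolution Y)

/-- The first syzygy of a projective resolution. -/
noncomputable abbrev syzygy : D := kernel (P.π.f 0)

noncomputable def syzygyLift : P.complex.X 1 ⟶ syzygy P :=
  kernel.lift (P.π.f 0) (P.complex.d 1 0) (P.complex_d_comp_π_f_zero)

instance syzygyLift_epi : Epi (syzygyLift P) := by
  have := P.exact₀
  rw [ShortComplex.exact_iff_epi_kernel_lift] at this
  exact this

/-- The truncated complex resolving the syzygy. -/
noncomputable abbrev syzygyComplex : ChainComplex D ℕ :=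
  ChainComplex.of (fun k => P.complex.X (k + 1)) (fun k => P.complex.d (k + 2) (k + 1))
    (fun k => by simp)

lemma syzygyComplex_d (k : ℕ) :
    (syzygyComplex P).d (k + 1) k = P.complex.d (k + 2) (k + 1) :=
  ChainComplex.of_d (fun k => P.complex.X (k + 1)) (fun k => P.complex.d (k + 2) (k + 1)) k

noncomputable def syzygyRes : CategoryTheory.ProjectiveResolution (syzygy P) := by
  refine mkProjRes (syzygyComplex P) (fun n => P.projective (n + 1)) (syzygyLift P) ?_ (syzygyLift_epi P) ?_ ?_
  · show (syzygyComplex P).d 1 0 ≫ syzygyLift P = 0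
    rw [show (syzygyComplex P).d 1 0 = P.complex.d 2 1 from syzygyComplex_d P 0,
      ← cancel_mono (kernel.ι (P.π.f 0)), Category.assoc, zero_comp,
      syzygyLift, kernel.lift_ι]
    simp
  · have base : (ShortComplex.mk (P.complex.d 2 1) (syzygyLift P ≫ kernel.ι (P.π.f 0))
        (by rw [syzygyLift, kernel.lift_ι]; simp)).Exact :=
      exact_congr rfl (kernel.lift_ι _ _ _).symm (P.exact_succ 0)
    have base2 : (ShortComplex.mk (P.complex.d 2 1) (syzygyLift P)
        (by rw [← cancel_mono (kernel.ι (P.π.f 0)), Category.assoc, zero_comp,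
              syzygyLift, kernel.lift_ι]; simp)).Exact := exact_of_comp_mono base
    exact exact_congr (syzygyComplex_d P 0).symm rfl base2
  · intro n
    rw [HomologicalComplex.exactAt_iff' _ (n + 2) (n + 1) n (by simp) (by simp)]
    exact exact_congr ((syzygyComplex_d P (n + 1)).symm)
      ((syzygyComplex_d P n).symm) (P.exact_succ (n + 1))

lemma syzygyRes_X (k : ℕ) : (syzygyRes P).complex.X k = P.complex.X (k + 1) := rfl

end Syzygy

lemma isZero_biprod (X Y : D) (hX : IsZero X) (hY : IsZero Y) : IsZero (X ⊞ Y) := by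
  rw [IsZero.iff_id_eq_zero]
  apply biprod.hom_ext
  · exact hX.eq_of_tgt _ _
  · exact hY.eq_of_tgt _ _

section Cone

variable {S : ShortComplex D} [Mono S.f] [Epi S.g]
  (P' : CategoryTheory.ProjectiveResolution S.X₁) (P : CategoryTheory.ProjectiveResolution S.X₂)

noncomputable def coneφ : P'.complex ⟶ P.complex :=
  CategoryTheory.ProjectiveResolution.lift S.f P' P

noncomputable abbrev coneX : ℕ → D
  | 0 => P.complex.X 0
  | (k + 1) => P.complex.X (k + 1) ⊞ P'.complex.X k

noncomputable def coneD : ∀ k : ℕ, coneX P' P (k + 1) ⟶ coneX P' P k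
  | 0 => biprod.desc (P.complex.d 1 0) ((coneφ P' P).f 0)
  | (k + 1) => biprod.desc (P.complex.d (k + 2) (k + 1) ≫ biprod.inl)
      ((coneφ P' P).f (k + 1) ≫ biprod.inl - P'.complex.d (k + 1) k ≫ biprod.inr)

lemma coneD_sq : ∀ k, coneD P' P (k + 1) ≫ coneD P' P k = 0
  | 0 => by
    dsimp [coneD]
    apply biprod.hom_ext'
    · simp
    · simp [Preadditive.sub_comp, HomologicalComplex.Hom.comm]
  | (k + 1) => by
    dsimp [coneD]
    apply biprod.hom_ext'
    · simp
    · apply biprod.hom_ext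
      · simp [Preadditive.sub_comp, Preadditive.comp_sub, HomologicalComplex.Hom.comm]
      · simp [Preadditive.sub_comp, Preadditive.comp_sub]

noncomputable abbrev coneComplex : ChainComplex D ℕ :=
  ChainComplex.of (coneX P' P) (coneD P' P) (coneD_sq P' P)

lemma coneComplex_d (k : ℕ) : (coneComplex P' P).d (k + 1) k = coneD P' P k :=
  ChainComplex.of_d (coneX P' P) (coneD P' P) k

lemma coneφ₀ : (coneφ P' P).f 0 ≫ P.π.f 0 = P'.π.f 0 ≫ S.f :=
  CategoryTheory.ProjectiveResolution.lift_commutes_zero S.f P' P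

lemma coneD_exact : ∀ n : ℕ,
    (ShortComplex.mk (coneD P' P (n + 1)) (coneD P' P n) (coneD_sq P' P n)).Exact
  | 0 => by
    rw [ShortComplex.exact_iff_exact_up_to_refinements]
    intro A a ha
    dsimp [coneD] at ha ⊢
    have ha' : a ≫ biprod.fst ≫ P.complex.d 1 0 + a ≫ biprod.snd ≫ (coneφ P' P).f 0 = 0 := by
      rw [biprod.desc_eq, Preadditive.comp_add, ← Category.assoc, ← Category.assoc] at ha
      simpa only [Category.assoc] using ha
    have h1 : (a ≫ biprod.snd) ≫ P'.π.f 0 = 0 := by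
      have h2 := congrArg (fun t => t ≫ P.π.f 0) ha'
      simp only [Preadditive.add_comp, Category.assoc, zero_comp,
        CategoryTheory.ProjectiveResolution.complex_d_comp_π_f_zero, comp_zero, zero_add] at h2
      rw [coneφ₀ P' P] at h2
      exact (cancel_mono S.f).1 ((Category.assoc _ _ _).trans ((Category.assoc _ _ _).trans
        (h2.trans zero_comp.symm)))
    obtain ⟨A₁, π₁, hπ₁, z, hz⟩ := P'.exact₀.exact_up_to_refinements (a ≫ biprod.snd) h1
    dsimp at hz
    have hc : (π₁ ≫ a ≫ biprod.fst + z ≫ (coneφ P' P).f 1) ≫ P.complex.d 1 0 = 0 := by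
      simp only [Preadditive.add_comp, Category.assoc, HomologicalComplex.Hom.comm]
      rw [← Category.assoc z, ← hz, Category.assoc, Category.assoc,
        ← Preadditive.comp_add, ha', comp_zero]
    obtain ⟨A₂, π₂, hπ₂, w', hw⟩ := (P.exact_succ 0).exact_up_to_refinements _ hc
    dsimp at hw
    refine ⟨A₂, π₂ ≫ π₁, epi_comp _ _, biprod.lift w' (-(π₂ ≫ z)), ?_⟩
    apply biprod.hom_ext
    · rw [biprod.lift_desc]
      simp only [Preadditive.add_comp, Preadditive.sub_comp, Preadditive.neg_comp,
        Category.assoc, biprod.inl_fst, biprod.inr_fst, Category.comp_id, comp_zero,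
        neg_zero, sub_zero, add_zero]
      rw [← hw]
      simp only [Preadditive.comp_add, Category.assoc]
      abel
    · rw [biprod.lift_desc]
      simp only [Preadditive.add_comp, Preadditive.sub_comp, Preadditive.neg_comp,
        Category.assoc, biprod.inl_snd, biprod.inr_snd, Category.comp_id, comp_zero,
        neg_zero, sub_zero, zero_add, zero_sub, neg_neg, Preadditive.comp_neg]
      rw [← hz]
  | (n + 1) => by
    rw [ShortComplex.exact_iff_exact_up_to_refinements]
    intro A a ha
    dsimp [coneD] at ha ⊢
    have hfst : a ≫ biprod.fst ≫ P.complex.d (n + 2) (n + 1)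
        + a ≫ biprod.snd ≫ (coneφ P' P).f (n + 1) = 0 := by
      have h2 := congrArg (fun t => t ≫ biprod.fst) ha
      simpa only [Category.assoc, zero_comp, biprod.desc_eq, Preadditive.comp_add,
        Preadditive.add_comp, Preadditive.sub_comp, Preadditive.comp_sub, biprod.inl_fst,
        biprod.inr_fst, Category.comp_id, comp_zero, sub_zero] using h2
    have hsnd : (a ≫ biprod.snd) ≫ P'.complex.d (n + 1) n = 0 := by
      have h2 := congrArg (fun t => t ≫ biprod.snd) ha
      simp only [Category.assoc, zero_comp, biprod.desc_eq, Preadditive.comp_add,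
        Preadditive.add_comp, Preadditive.sub_comp, Preadditive.comp_sub, biprod.inl_snd,
        biprod.inr_snd, Category.comp_id, comp_zero, zero_comp, zero_add, zero_sub,
        Preadditive.comp_neg, neg_eq_zero] at h2
      simpa only [Category.assoc] using h2
    obtain ⟨A₁, π₁, hπ₁, z, hz⟩ := (P'.exact_succ n).exact_up_to_refinements
      (a ≫ biprod.snd) hsnd
    dsimp at hz
    have hc : (π₁ ≫ a ≫ biprod.fst + z ≫ (coneφ P' P).f (n + 2)) ≫
        P.complex.d (n + 2) (n + 1) = 0 := by
      simp only [Preadditive.add_comp, Category.assoc, HomologicalComplex.Hom.comm]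
      rw [← Category.assoc z, ← hz, Category.assoc, Category.assoc,
        ← Preadditive.comp_add, hfst, comp_zero]
    obtain ⟨A₂, π₂, hπ₂, w', hw⟩ := (P.exact_succ (n + 1)).exact_up_to_refinements _ hc
    dsimp at hw
    refine ⟨A₂, π₂ ≫ π₁, epi_comp _ _, biprod.lift w' (-(π₂ ≫ z)), ?_⟩
    apply biprod.hom_ext
    · rw [biprod.lift_desc]
      simp only [Preadditive.add_comp, Preadditive.sub_comp, Preadditive.neg_comp,
        Category.assoc, biprod.inl_fst, biprod.inr_fst, Category.comp_id, comp_zero,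
        neg_zero, sub_zero, add_zero]
      rw [← hw]
      simp only [Preadditive.comp_add, Category.assoc]
      abel
    · rw [biprod.lift_desc]
      simp only [Preadditive.add_comp, Preadditive.sub_comp, Preadditive.neg_comp,
        Category.assoc, biprod.inl_snd, biprod.inr_snd, Category.comp_id, comp_zero,
        neg_zero, sub_zero, zero_add, zero_sub, neg_neg, Preadditive.comp_neg]
      rw [← hz]

lemma coneComplex_proj (k : ℕ) : Projective ((coneComplex P' P).X k) := by
  cases k with
  | zero => exact P.projective 0
  | succ k => exact inferInstanceAs (Projective (P.complex.X (k + 1) ⊞ P'.complex.X k))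

lemma coneW : (coneComplex P' P).d 1 0 ≫ (P.π.f 0 ≫ S.g) = 0 := by
  rw [coneComplex_d]
  dsimp [coneD]
  apply biprod.hom_ext'
  · simp
    exact (P.complex_d_comp_π_f_zero_assoc S.g).trans zero_comp
  · rw [biprod.inr_desc_assoc]
    exact (Category.assoc _ _ _).symm.trans ((congrArg (· ≫ S.g) (coneφ₀ P' P)).trans
      ((Category.assoc _ _ _).trans ((congrArg (P'.π.f 0 ≫ ·) S.zero).trans
        (comp_zero.trans comp_zero.symm))))

noncomputable def coneH0 (hS : S.Exact) :
    IsColimit (CokernelCofork.ofπ (P.π.f 0 ≫ S.g) (coneW P' P)) := by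
  refine CokernelCofork.IsColimit.ofπ' _ _ (fun {T} u hu => ?_)
    (hp := @epi_comp _ _ _ _ _ (P.π.f 0) (inferInstance : Epi (P.π.f 0)) S.g (inferInstance : Epi S.g))
  rw [coneComplex_d] at hu
  have h1 : P.complex.d 1 0 ≫ u = 0 := by
    have h2 := congrArg (fun t => biprod.inl ≫ t) hu
    simpa [coneD] using h2
  have h2 : (coneφ P' P).f 0 ≫ u = 0 := by
    have h3 := congrArg (fun t => biprod.inr ≫ t) hu
    simpa [coneD] using h3
  obtain ⟨v, hv⟩ := CokernelCofork.IsColimit.desc' P.isColimitCokernelCofork u h1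
  simp only [CategoryTheory.ProjectiveResolution.cokernelCofork, Cofork.π_ofπ] at hv
  have hfv : S.f ≫ v = 0 := by
    exact (cancel_epi (P'.π.f 0)).1 (((Category.assoc _ _ _).symm.trans
      ((congrArg (· ≫ v) (coneφ₀ P' P).symm).trans ((Category.assoc _ _ _).trans
        ((congrArg ((coneφ P' P).f 0 ≫ ·) hv).trans h2)))).trans comp_zero.symm)
  obtain ⟨l, hl⟩ := CokernelCofork.IsColimit.desc' hS.gIsCokernel v hfv
  simp only [Cofork.π_ofπ] at hl
  exact ⟨l, (Category.assoc _ _ _).trans ((congrArg (P.π.f 0 ≫ ·) hl).trans hv)⟩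

noncomputable def coneRes (hS : S.Exact) : CategoryTheory.ProjectiveResolution S.X₃ :=
  mkProjRes (coneComplex P' P) (coneComplex_proj P' P) (P.π.f 0 ≫ S.g) (coneW P' P)
    (@epi_comp _ _ _ _ _ (P.π.f 0) (inferInstance : Epi (P.π.f 0)) S.g (inferInstance : Epi S.g))
    (ShortComplex.exact_of_g_is_cokernel _ (coneH0 P' P hS))
    (fun n => by
      rw [HomologicalComplex.exactAt_iff' _ (n + 2) (n + 1) n (by simp) (by simp)]
      exact exact_congr (coneComplex_d P' P (n + 1)).symm (coneComplex_d P' P n).symm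
        (coneD_exact P' P n))

lemma coneRes_vanish {a b : ℕ} (h' : ∀ k, a < k → IsZero (P'.complex.X k))
    (h : ∀ k, b < k → IsZero (P.complex.X k)) :
    ∀ k, max b (a + 1) < k → IsZero ((coneComplex P' P).X k)
  | 0 => fun hk => absurd hk (by omega)
  | (k + 1) => fun hk => by
      have h1 : IsZero (P.complex.X (k + 1)) := h (k + 1) (by omega)
      have h2 : IsZero (P'.complex.X k) := h' k (by omega)
      exact isZero_biprod _ _ h1 h2

end Cone

lemma projDim_le_iff (X : D) (n : ℕ) :
    projDim X ≤ (n : ℕ∞) ↔ ∃ P : CategoryTheory.ProjectiveResolution X,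
      ∀ k, n < k → IsZero (P.complex.X k) := by
  constructor
  · intro hle
    by_contra hc
    have key : ((n + 1 : ℕ) : ℕ∞) ≤ projDim X := by
      refine le_iInf₂ fun m hm => ?_
      rcases hm with ⟨P, hP⟩
      rw [Nat.cast_le]
      by_contra hm'
      push_neg at hm'
      exact hc ⟨P, fun k hk => hP k (lt_of_le_of_lt (Nat.le_of_lt_succ hm') hk)⟩
    have h2 := key.trans hle
    rw [Nat.cast_le] at h2
    omega
  · rintro ⟨P, hP⟩
    exact iInf₂_le n ⟨P, hP⟩

lemma projDim_le_of_iso {X Y : D} (e : X ≅ Y) (n : ℕ) (h : projDim X ≤ (n : ℕ∞)) :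
    projDim Y ≤ (n : ℕ∞) := by
  rw [projDim_le_iff] at h ⊢
  obtain ⟨P, hP⟩ := h
  exact ⟨{ complex := P.complex
           π := P.π ≫ (ChainComplex.single₀ D).map e.hom
           quasiIso := inferInstance }, hP⟩

lemma projDim_le_zero_of_projective (X : D) [Projective X] [EnoughProjectives D] :
    projDim X ≤ ((0 : ℕ) : ℕ∞) := by
  rw [projDim_le_iff]
  refine ⟨CategoryTheory.ProjectiveResolution.self X, fun k hk => ?_⟩
  exact HomologicalComplex.isZero_single_obj_X _ 0 X k (by omega)

lemma projDim_shortExact_third (S : ShortComplex D) (hS : S.Exact) [Mono S.f] [Epi S.g]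
    (a b : ℕ) (ha : projDim S.X₁ ≤ (a : ℕ∞)) (hb : projDim S.X₂ ≤ (b : ℕ∞)) :
    projDim S.X₃ ≤ ((max b (a + 1) : ℕ) : ℕ∞) := by
  rw [projDim_le_iff] at ha hb ⊢
  obtain ⟨P', hP'⟩ := ha
  obtain ⟨P, hP⟩ := hb
  exact ⟨coneRes P' P hS, coneRes_vanish P' P hP' hP⟩

end RecollementAux

open RecollementAux

/-- Let `(𝒜, ℬ, 𝒞)` be a recollement of abelian categories, all with enough projectives and
injectives.  If there is `t` such that `pd_ℬ i(A) ≤ t` for every object `A` of `𝒜`, then for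
every object `C` of `𝒞` one has `pd_ℬ l(C) ≤ pd_𝒞 C + t + 1`; in particular, the functor
`l : 𝒞 ⥤ ℬ` preserves objects of finite projective dimension. -/
theorem recollement_projDim_l_le {A : Type u₁} {B : Type u₂} {C : Type u₃}
    [Category.{v₁} A] [Category.{v₂} B] [Category.{v₃} C]
    [Abelian A] [Abelian B] [Abelian C]
    [EnoughProjectives A] [EnoughInjectives A]
    [EnoughProjectives B] [EnoughInjectives B]
    [EnoughProjectives C] [EnoughInjectives C]
    (R : Recollement A B C) (t : ℕ)
    (h : ∀ X : A, projDim (R.i.obj X) ≤ (t : ℕ∞)) :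
    (∀ Y : C, projDim (R.l.obj Y) ≤ projDim Y + t + 1) ∧
    (∀ Y : C, projDim Y ≠ ⊤ → projDim (R.l.obj Y) ≠ ⊤) := by
  classical
  haveI := R.l_full
  haveI := R.l_faithful
  haveI : R.l.IsLeftAdjoint := ⟨_, ⟨R.adj_le⟩⟩
  haveI : R.e.IsLeftAdjoint := ⟨_, ⟨R.adj_er⟩⟩
  haveI : PreservesColimitsOfSize.{0, 0} R.e := R.adj_er.leftAdjoint_preservesColimits
  haveI : PreservesLimitsOfSize.{0, 0} R.e := R.adj_le.rightAdjoint_preservesLimits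
  haveI : PreservesColimitsOfSize.{0, 0} R.l := R.adj_le.leftAdjoint_preservesColimits
  haveI : R.e.PreservesEpimorphisms := inferInstance
  have main : ∀ n : ℕ, ∀ Y : C,
      (∃ P : CategoryTheory.ProjectiveResolution Y, ∀ k, n < k → IsZero (P.complex.X k)) →
      projDim (R.l.obj Y) ≤ ((n + t + 1 : ℕ) : ℕ∞) := by
    intro n
    induction n with
    | zero =>
      rintro Y ⟨P, hP⟩
      have hd : P.complex.d 1 0 = 0 := (hP 1 (by omega)).eq_of_src _ _
      have hmono : Mono (P.π.f 0) := P.exact₀.mono_g hd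
      have hiso : IsIso (P.π.f 0) := isIso_of_mono_of_epi _
      have hYproj : Projective Y := Projective.of_iso (@asIso _ _ _ _ (P.π.f 0) hiso) (P.projective 0)
      haveI : Projective (R.l.obj Y) := R.adj_le.map_projective _ hYproj
      exact (projDim_le_zero_of_projective (R.l.obj Y)).trans (by
        rw [Nat.cast_le]; omega)
    | succ n IH =>
      rintro Y ⟨P, hP⟩
      set K := kernel (P.π.f 0) with hKdef
      set m : K ⟶ P.complex.X 0 := kernel.ι (P.π.f 0) with hmdef
      -- the syzygy has a resolution of length n
      have hK : projDim (R.l.obj K) ≤ ((n + t + 1 : ℕ) : ℕ∞) := by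
        refine IH K ⟨syzygyRes P, fun k hk => ?_⟩
        have := hP (k + 1) (by omega)
        exact this
      set g : R.l.obj K ⟶ R.l.obj (P.complex.X 0) := R.l.map m with hgdef
      -- the kernel of g is killed by e, hence lies in the image of i
      have hN : projDim (kernel g) ≤ ((t : ℕ) : ℕ∞) := by
        have hmono : Mono ((R.l ⋙ R.e).map m) := by
          have hnat := R.adj_le.unit.naturality m
          have heq : (R.l ⋙ R.e).map m =
              inv (R.adj_le.unit.app K) ≫ m ≫ R.adj_le.unit.app (P.complex.X 0) := by
            rw [IsIso.eq_inv_comp]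
            simpa using hnat.symm
          rw [heq]
          infer_instance
        haveI : Mono (R.e.map g) := hmono
        have hzero : IsZero (R.e.obj (kernel g)) := by
          have hker : IsZero (kernel (R.e.map g)) :=
            (isZero_zero _).of_iso (kernel.ofMono (R.e.map g))
          exact hker.of_iso (PreservesKernel.iso R.e g)
        obtain ⟨A₀, ⟨eiso⟩⟩ := (R.essImage_i_eq_ker_e (kernel g)).2 hzero
        exact projDim_le_of_iso eiso t (h A₀)
      -- first short exact sequence : 0 → ker g → l K → im g → 0
      have hbase : (ShortComplex.mk (kernel.ι g) g (kernel.condition g)).Exact :=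
        ShortComplex.exact_of_f_is_kernel _ (kernelIsKernel g)
      have hbase' : (ShortComplex.mk (kernel.ι g) (factorThruImage g ≫ image.ι g)
          (by rw [image.fac]; exact kernel.condition g)).Exact :=
        exact_congr rfl (image.fac g).symm hbase
      have hS₁ : (ShortComplex.mk (kernel.ι g) (factorThruImage g)
          (by rw [← cancel_mono (image.ι g), Category.assoc, image.fac, zero_comp]
              exact kernel.condition g)).Exact := exact_of_comp_mono hbase'
      have hZ : projDim (image g) ≤ ((max (n + t + 1) (t + 1) : ℕ) : ℕ∞) :=
        projDim_shortExact_third _ hS₁ t (n + t + 1) hN hK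
      have hZ' : projDim (image g) ≤ ((n + t + 1 : ℕ) : ℕ∞) := by
        have : max (n + t + 1) (t + 1) = n + t + 1 := by omega
        rwa [this] at hZ
      -- second short exact sequence : 0 → im g → l P₀ → coker g → 0
      have hbase2 : (ShortComplex.mk g (cokernel.π g) (cokernel.condition g)).Exact :=
        ShortComplex.exact_of_g_is_cokernel _ (cokernelIsCokernel g)
      have hbase2' : (ShortComplex.mk (factorThruImage g ≫ image.ι g) (cokernel.π g)
          (by rw [image.fac]; exact cokernel.condition g)).Exact :=
        exact_congr (image.fac g).symm rfl hbase2
      have hS₂ : (ShortComplex.mk (image.ι g) (cokernel.π g)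
          (by rw [← cancel_epi (factorThruImage g), ← Category.assoc, image.fac, comp_zero]
              exact cokernel.condition g)).Exact := exact_of_epi_comp hbase2'
      haveI : Projective (R.l.obj (P.complex.X 0)) := R.adj_le.map_projective _ (P.projective 0)
      have hP₀ : projDim (R.l.obj (P.complex.X 0)) ≤ ((0 : ℕ) : ℕ∞) :=
        projDim_le_zero_of_projective _
      have hC : projDim (cokernel g) ≤ ((max 0 (n + t + 1 + 1) : ℕ) : ℕ∞) :=
        projDim_shortExact_third _ hS₂ (n + t + 1) 0 hZ' hP₀
      -- identify the cokernel of g with l Y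
      have hSC : (ShortComplex.mk m (P.π.f 0) (kernel.condition _)).Exact :=
        ShortComplex.exact_of_f_is_kernel _ (kernelIsKernel _)
      haveI : Epi (ShortComplex.mk m (P.π.f 0) (kernel.condition _)).g := by
        dsimp
        exact (inferInstance : Epi (P.π.f 0))
      have hgc := hSC.gIsCokernel
      have isoY : cokernel m ≅ Y :=
        IsColimit.coconePointUniqueUpToIso (cokernelIsCokernel m) hgc
      have isoLY : cokernel g ≅ R.l.obj Y :=
        (PreservesCokernel.iso R.l m).symm ≪≫ R.l.mapIso isoY
      have hfinal := projDim_le_of_iso isoLY _ hC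
      refine hfinal.trans ?_
      rw [Nat.cast_le]
      omega
  constructor
  · intro Y
    by_cases htop : projDim Y = ⊤
    · rw [htop]
      simp only [top_add]
      exact le_top
    · obtain ⟨n, hn⟩ := WithTop.ne_top_iff_exists.1 htop
      have hres := (projDim_le_iff Y n).1 (le_of_eq hn.symm)
      have hb := main n Y hres
      refine hb.trans (le_of_eq ?_)
      rw [← hn]
      push_cast
      first
        | rfl
        | exact add_right_comm _ _ _
        | simp [add_comm, add_assoc, add_left_comm]
  · intro Y hY
    obtain ⟨n, hn⟩ := WithTop.ne_top_iff_exists.1 hY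
    have hres := (projDim_le_iff Y n).1 (le_of_eq hn.symm)
    have hb := main n Y hres
    exact ne_top_of_le_ne_top (WithTop.natCast_ne_top _) hb
end

section
/- Let (𝒜, ℬ, 𝒞) be a recollement of abelian categories such that ℬ has enough projectives and injectives, and let m ≥ 1 be an integer. For B in ℬ let H(B) denote the kernel of the unit η_B : B → i(q(B)) of the adjunction (q, i) (this unit is an epimorphism for every B). Then the following are equivalent: (i) pd_ℬ i(P) ≤ m for every projective object P of 𝒜; (ii) for every projective object P of ℬ, pd_ℬ H(P) ≤ m − 1. -/
/-!
A recollement `(𝒜, ℬ, 𝒞)` of abelian categories consists of functors `i : 𝒜 ⥤ ℬ`,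
`e : ℬ ⥤ 𝒞`, `q, p : ℬ ⥤ 𝒜` and `l, r : 𝒞 ⥤ ℬ` such that `(l, e)`, `(e, r)`, `(q, i)`,
`(i, p)` are adjoint pairs, the functors `i`, `l` and `r` are fully faithful, and the
essential image of `i` equals the kernel of `e`.

For `B ∈ ℬ` let `H(B)` be the kernel of the unit `η_B : B → i(q(B))` of the adjunction
`(q, i)` (this unit is an epimorphism for every `B`).

STATEMENT: suppose `ℬ` has enough projectives and injectives and let `m ≥ 1`.  Then the
following are equivalent: (i) `pd_ℬ i(P) ≤ m` for every projective `P` of `𝒜`;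
(ii) `pd_ℬ H(P) ≤ m - 1` for every projective `P` of `ℬ`.
-/

open CategoryTheory CategoryTheory.Limits

universe w v₁ v₂ v₃ u₁ u₂ u₃

/-!
The resolution-theoretic `projDim X ≤ n` agrees with the Ext-theoretic
`HasProjectiveDimensionLE X n`: a resolution of length `n` computes `Ext^i(X, -)` as zero for
`i > n`, and conversely a resolution of length `n` is built by splicing one of length `n - 1`
of a syzygy. In these terms the theorem is dimension shifting along the short exact sequence
`0 → H(P) → P → i q P → 0`, whose middle term is projective when `P` is: (i) ⇒ (ii) because
`q P` is projective, (ii) ⇒ (i) because, for `Q ↠ i P` with `Q` projective, `i P` is a retract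
of `i q Q` (the epimorphism `q Q ↠ q i P ≅ P` splits).
-/
namespace CategoryTheory.ProjectiveResolution

variable {C : Type*} [Category C] [Abelian C] {X : C}

noncomputable def ofExact (K : ChainComplex C ℕ) [∀ n, Projective (K.X n)]
    (ε : K.X 0 ⟶ X) (w : K.d 1 0 ≫ ε = 0) (hε : Epi ε) (h₀ : (ShortComplex.mk _ _ w).Exact)
    (h : ∀ n, K.ExactAt (n + 1)) : ProjectiveResolution X where
  complex := K
  π := (ChainComplex.toSingle₀Equiv _ _).symm ⟨ε, w⟩
  quasiIso := ⟨fun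
    | 0 => by
      rw [ChainComplex.quasiIsoAt₀_iff,
        ShortComplex.quasiIso_iff_of_zeros' _ (K.shape 0 0 (by simp)) rfl rfl]
      refine (ShortComplex.exact_and_epi_g_iff_of_iso ?_).2 ⟨h₀, hε⟩
      exact ShortComplex.isoMk (Iso.refl _) (Iso.refl _) (Iso.refl _)
        ((Category.id_comp _).trans (Category.comp_id _).symm)
        (by simp; exact (Category.id_comp _).trans (Category.comp_id _).symm)
    | n + 1 => by
      rw [quasiIsoAt_iff_exactAt' _ _ (ChainComplex.exactAt_succ_single_obj _ _)]
      exact h n⟩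

variable (Q : ProjectiveResolution X)

noncomputable def augmentation : Q.complex.X 0 ⟶ X :=
  (ChainComplex.toSingle₀Equiv Q.complex X Q.π).1

lemma d_comp_augmentation : Q.complex.d 1 0 ≫ Q.augmentation = 0 :=
  (ChainComplex.toSingle₀Equiv Q.complex X Q.π).2

instance : Epi Q.augmentation := inferInstanceAs (Epi (Q.π.f 0))

lemma exact_augmentation : (ShortComplex.mk _ _ Q.d_comp_augmentation).Exact :=
  Q.exact₀

noncomputable def spliceShortExact {S : ShortComplex C} (hS : S.ShortExact) [Projective S.X₂]
    (Q : ProjectiveResolution S.X₁) : ProjectiveResolution S.X₃ :=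
  have : Mono S.f := hS.mono_f
  have hw : Q.complex.d 1 0 ≫ Q.augmentation ≫ S.f = 0 := by
    rw [← Category.assoc, Q.d_comp_augmentation, zero_comp]
  have hzero : (Q.augmentation ≫ S.f) ≫ S.g = 0 := by simp
  have h₀ : (ShortComplex.mk (Q.augmentation ≫ S.f) S.g hzero).Exact :=
    (ShortComplex.exact_iff_of_epi_of_isIso_of_mono
      (S₁ := ShortComplex.mk (Q.augmentation ≫ S.f) S.g hzero) (S₂ := S)
      { τ₁ := Q.augmentation, τ₂ := 𝟙 _, τ₃ := 𝟙 _ }).2 hS.exact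
  have : ∀ n, Projective ((Q.complex.augment (Q.augmentation ≫ S.f) hw).X n)
    | 0 => (inferInstance : Projective S.X₂)
    | k + 1 => Q.projective k
  ofExact (Q.complex.augment (Q.augmentation ≫ S.f) hw) S.g hzero hS.epi_g h₀
    (fun
      | 0 => by
        rw [HomologicalComplex.exactAt_iff' _ 2 1 0 (by simp) (by simp)]
        exact (ShortComplex.exact_iff_of_epi_of_isIso_of_mono
          (S₁ := ShortComplex.mk _ _ Q.d_comp_augmentation)
          (S₂ := ShortComplex.mk (Q.complex.d 1 0) (Q.augmentation ≫ S.f) hw)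
          { τ₁ := 𝟙 _, τ₂ := 𝟙 _, τ₃ := S.f }).1 Q.exact_augmentation
      | k + 1 => by
        rw [HomologicalComplex.exactAt_iff' _ (k + 3) (k + 2) (k + 1) (by simp) (by simp)]
        exact Q.exact_succ k)

lemma hasProjectiveDimensionLT {n : ℕ} (hQ : ∀ k, n ≤ k → IsZero (Q.complex.X k)) :
    HasProjectiveDimensionLT X n := by
  let := HasExt.standard C
  refine HasProjectiveDimensionLT.mk fun i hi Y e => ?_
  obtain ⟨f, _, rfl⟩ := Q.extMk_surjective e (i + 1) rfl
  obtain rfl : f = 0 := (hQ i hi).eq_of_src _ _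
  exact Q.extMk_zero _ _

end CategoryTheory.ProjectiveResolution

namespace CategoryTheory

variable {C : Type*} [Category C] [Abelian C] [EnoughProjectives C]

theorem exists_projectiveResolution_of_hasProjectiveDimensionLE :
    ∀ (n : ℕ) (X : C), HasProjectiveDimensionLE X n →
      ∃ Q : ProjectiveResolution X, ∀ k, n < k → IsZero (Q.complex.X k)
  | 0, X, hX =>
    have := projective_iff_hasProjectiveDimensionLT_one.2 hX
    ⟨ProjectiveResolution.self X, fun k hk =>
      HomologicalComplex.isZero_single_obj_X _ 0 X k (by omega)⟩
  | n + 1, X, hX => by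
    let S := ShortComplex.mk (kernel.ι (Projective.π X)) (Projective.π X) (kernel.condition _)
    have hS : S.ShortExact := { exact := ShortComplex.exact_kernel _ }
    obtain ⟨Q, hQ⟩ := exists_projectiveResolution_of_hasProjectiveDimensionLE n S.X₁
      (hS.hasProjectiveDimensionLT_X₁ (n + 1) inferInstance hX)
    exact ⟨Q.spliceShortExact hS, fun
      | k + 1, hk => hQ k (by omega)⟩

end CategoryTheory

open CategoryTheory in
theorem projDim_le_iff {C : Type*} [Category C] [Abelian C] [EnoughProjectives C] {X : C}
    {n : ℕ} : projDim X ≤ n ↔ HasProjectiveDimensionLE X n := by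
  refine ⟨fun h => ?_, fun hX => ?_⟩
  · by_contra hX
    suffices ((n + 1 : ℕ) : ℕ∞) ≤ projDim X from
      absurd (this.trans h) (by exact_mod_cast Nat.not_succ_le_self n)
    refine le_iInf₂ fun k ⟨Q, hQ⟩ => ?_
    have : HasProjectiveDimensionLE X k := Q.hasProjectiveDimensionLT hQ
    by_contra! hk
    exact hX (hasProjectiveDimensionLT_of_ge X (k + 1) (n + 1) (by exact_mod_cast hk))
  · exact iInf₂_le n (exists_projectiveResolution_of_hasProjectiveDimensionLE n X hX)

namespace Recollement

variable {A : Type u₁} {B : Type u₂} {C : Type u₃}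
    [Category.{v₁} A] [Category.{v₂} B] [Category.{v₃} C]
    [Abelian A] [Abelian B] [Abelian C] (R : Recollement A B C)

/-- The cokernel of `η_X` lies in the kernel of `e`, hence is `i A₀`; the quotient map
`i q X ⟶ i A₀` then corresponds under the adjunction to `η_X ≫ π = 0`, so it vanishes. -/
lemma epi_unit_app (X : B) : Epi (R.adj_qi.unit.app X) := by
  let := R.i_full
  have := R.adj_er.isLeftAdjoint
  set η := R.adj_qi.unit.app X
  have hc : IsZero (R.e.obj (cokernel η)) :=
    IsZero.of_epi (R.e.map (cokernel.π η))
      ((R.essImage_i_eq_ker_e _).1 (R.i.obj_mem_essImage _))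
  obtain ⟨A₀, ⟨φ⟩⟩ := (R.essImage_i_eq_ker_e _).2 hc
  have ha : R.i.preimage (cokernel.π η ≫ φ.inv) = 0 :=
    (R.adj_qi.homEquiv X A₀).injective (by simp [Adjunction.homEquiv_unit, η])
  refine Abelian.epi_of_cokernel_π_eq_zero _ ((cancel_mono φ.inv).1 ?_)
  rw [← R.i.map_preimage (cokernel.π η ≫ φ.inv), ha, R.i.map_zero, zero_comp]

lemma shortExact_unit_app (X : B) :
    (ShortComplex.mk _ _ (kernel.condition (R.adj_qi.unit.app X))).ShortExact :=
  have := R.epi_unit_app X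
  { exact := ShortComplex.exact_kernel _ }

noncomputable def retractOfEpi {P : A} [Projective P] {Y : B} (π : Y ⟶ R.i.obj P) [Epi π] :
    Retract (R.i.obj P) (R.i.obj (R.q.obj Y)) :=
  letI := R.i_full; letI := R.i_faithful
  haveI := R.adj_qi.isLeftAdjoint
  let g := R.q.map π ≫ R.adj_qi.counit.app P
  Retract.map ⟨Projective.factorThru (𝟙 P) g, g, Projective.factorThru_comp _ _⟩ R.i

end Recollement

theorem recollement_pd_i_le_iff_pd_H_le_general {A : Type u₁} {B : Type u₂} {C : Type u₃}
    [Category.{v₁} A] [Category.{v₂} B] [Category.{v₃} C]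
    [Abelian A] [Abelian B] [Abelian C]
    [EnoughProjectives B]
    (R : Recollement A B C) (m : ℕ) (hm : 1 ≤ m) :
    (∀ P : A, Projective P → projDim (R.i.obj P) ≤ (m : ℕ∞)) ↔
    (∀ P : B, Projective P →
      projDim (kernel (R.adj_qi.unit.app P)) ≤ ((m - 1 : ℕ) : ℕ∞)) := by
  obtain ⟨n, rfl⟩ : ∃ n, m = n + 1 := ⟨m - 1, by omega⟩
  have := R.adj_ip.isLeftAdjoint
  simp only [projDim_le_iff, Nat.add_sub_cancel]
  refine ⟨fun h P hP => ?_, fun h P hP => ?_⟩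
  · exact ((R.shortExact_unit_app P).hasProjectiveDimensionLT_X₃_iff n hP).1
      (h _ (R.adj_qi.map_projective P hP))
  · have : HasProjectiveDimensionLT (R.i.obj (R.q.obj (Projective.over (R.i.obj P)))) (n + 2) :=
      ((R.shortExact_unit_app (Projective.over (R.i.obj P))).hasProjectiveDimensionLT_X₃_iff
        n (Projective.projective_over _)).2 (h _ (Projective.projective_over _))
    exact (R.retractOfEpi (Projective.π (R.i.obj P))).hasProjectiveDimensionLT (n + 2)

/-- Let `(𝒜, ℬ, 𝒞)` be a recollement of abelian categories such that `ℬ` has enough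
projectives and injectives, and let `m ≥ 1` be an integer.  For `B ∈ ℬ` let `H(B)` denote
the kernel of the unit `η_B : B ⟶ i(q(B))` of the adjunction `(q, i)`.  Then
`pd_ℬ i(P) ≤ m` for every projective object `P` of `𝒜` if and only if
`pd_ℬ H(P) ≤ m - 1` for every projective object `P` of `ℬ`. -/
theorem recollement_pd_i_le_iff_pd_H_le {A : Type u₁} {B : Type u₂} {C : Type u₃}
    [Category.{v₁} A] [Category.{v₂} B] [Category.{v₃} C]
    [Abelian A] [Abelian B] [Abelian C]
    [EnoughProjectives B] [EnoughInjectives B]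
    (R : Recollement A B C) (m : ℕ) (hm : 1 ≤ m) :
    (∀ P : A, Projective P → projDim (R.i.obj P) ≤ (m : ℕ∞)) ↔
    (∀ P : B, Projective P →
      projDim (kernel (R.adj_qi.unit.app P)) ≤ ((m - 1 : ℕ) : ℕ∞)) :=
  recollement_pd_i_le_iff_pd_H_le_general R m hm
end
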